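/- Let f : D² → ℝ be smooth with f > 0 everywhere, let φ : D² → D² be a smooth map, let 0 < ε < (min_{D²} f)/(max_{D²} f), and let η : ℝ → ℝ be smooth with −ε < η'(t) ≤ 1 for all t. Define F : ℝ × D² → ℝ by F(t,x) = (1−η'(t))f(x) + η'(t)f(φ(x)), and define the 1-form β_t on D² by β_t = β + (t−η(t))df + η(t)d(f∘φ). Consider the 1-form λ₀ = F dt + β_t on ℝ × D² ⊂ ℝ³, i.e. λ₀_{(t,x)}(s,v) = F(t,x)·s + (β_t)_x(v) for (s,v) ∈ ℝ × ℝ². Then F(t,x) > 0 for all (t,x), and λ₀ ∧ dλ₀ = F dt∧ω; that is, at every point (t,x) ∈ ℝ × D², (λ₀∧dλ₀)_{(t,x)}(e_t, e₁, e₂) = F(t,x)/π > 0, where e_t = (1,0,0) and e₁, e₂ are the standard horizontal basis vectors. In particular λ₀ is a contact form on ℝ × int(D²). -/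

import Mathlib

open Real MeasureTheory Metric Set Filter

noncomputable section

/-- The closed unit disk in `ℝ² ≅ ℂ`. -/
def D2 : Set ℂ := Metric.closedBall 0 1

/-- The standard primitive `β` of the area form `ω`: `β_p(v) = (p₁v₂ − p₂v₁)/(2π)`. -/
def beta (p v : ℂ) : ℝ := (p.re * v.im - p.im * v.re) / (2 * Real.pi)

lemma D2_uniqueDiffOn : UniqueDiffOn ℝ D2 := by
  apply uniqueDiffOn_convex (convex_closedBall 0 1)
  show (interior D2).Nonempty
  rw [show D2 = Metric.closedBall 0 1 from rfl, interior_closedBall _ one_ne_zero]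
  exact ⟨0, by simp⟩

lemma D2_closure_interior : closure (interior D2) = D2 := by
  rw [show D2 = Metric.closedBall 0 1 from rfl, interior_closedBall _ one_ne_zero,
    closure_ball _ one_ne_zero]

/-- Symmetry of the second derivative within the disk. -/
lemma D2_symm (f : ℂ → ℝ) (hfs : ContDiffOn ℝ (⊤ : ℕ∞) f D2) {x : ℂ} (hx : x ∈ D2) :
    IsSymmSndFDerivWithinAt ℝ f D2 x := by
  apply (hfs x hx).isSymmSndFDerivWithinAt (by rw [minSmoothness_of_isRCLikeNormedField]; exact WithTop.coe_le_coe.2 le_top) D2_uniqueDiffOn _ hx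
  rw [D2_closure_interior]; exact hx

/-- The main derivative computation for the 1-form coefficients. -/
lemma key_fderiv (f g : ℂ → ℝ) (hfs : ContDiffOn ℝ (⊤ : ℕ∞) f D2) (hgs : ContDiffOn ℝ (⊤ : ℕ∞) g D2)
    (η : ℝ → ℝ) (hη : ContDiff ℝ (⊤ : ℕ∞) η)
    (u w : ℝ × ℂ) (p : ℝ × ℂ) (hp : p ∈ (Set.univ : Set ℝ) ×ˢ D2) :
    fderivWithin ℝ
      (fun q : ℝ × ℂ => ((1 - deriv η q.1) * f q.2 + deriv η q.1 * g q.2) * u.1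
        + beta q.2 u.2 + (q.1 - η q.1) * fderivWithin ℝ f D2 q.2 u.2
        + η q.1 * fderivWithin ℝ g D2 q.2 u.2)
      ((Set.univ : Set ℝ) ×ˢ D2) p w
    = (-(deriv (deriv η) p.1) * w.1 * f p.2 + (1 - deriv η p.1) * fderivWithin ℝ f D2 p.2 w.2
        + deriv (deriv η) p.1 * w.1 * g p.2 + deriv η p.1 * fderivWithin ℝ g D2 p.2 w.2) * u.1
      + beta w.2 u.2
      + ((1 - deriv η p.1) * w.1 * fderivWithin ℝ f D2 p.2 u.2
          + (p.1 - η p.1) * (fderivWithin ℝ (fderivWithin ℝ f D2) D2 p.2 w.2) u.2)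
      + (deriv η p.1 * w.1 * fderivWithin ℝ g D2 p.2 u.2
          + η p.1 * (fderivWithin ℝ (fderivWithin ℝ g D2) D2 p.2 w.2) u.2) := by
  have hD2u : UniqueDiffOn ℝ D2 := D2_uniqueDiffOn
  have hSu : UniqueDiffOn ℝ ((Set.univ : Set ℝ) ×ˢ D2) := uniqueDiffOn_univ.prod hD2u
  have hp2 : p.2 ∈ D2 := hp.2
  have hηd : Differentiable ℝ η := hη.differentiable (by simp)
  have hη'd : Differentiable ℝ (deriv η) :=
    (contDiff_infty_iff_deriv.1 (hη.of_le (by simp))).2.differentiable (by simp)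
  have ha1 : HasDerivAt (fun t => 1 - deriv η t) (-(deriv (deriv η) p.1)) p.1 :=
    ((hη'd p.1).hasDerivAt).const_sub 1
  have ha2 : HasDerivAt (deriv η) (deriv (deriv η) p.1) p.1 := (hη'd p.1).hasDerivAt
  have ha3 : HasDerivAt (fun t => t - η t) (1 - deriv η p.1) p.1 :=
    (hasDerivAt_id p.1).sub (hηd p.1).hasDerivAt
  have ha4 : HasDerivAt η (deriv η p.1) p.1 := (hηd p.1).hasDerivAt
  have hb1 : HasFDerivWithinAt f (fderivWithin ℝ f D2 p.2) D2 p.2 :=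
    ((hfs.differentiableOn (by simp)) p.2 hp2).hasFDerivWithinAt
  have hb2 : HasFDerivWithinAt g (fderivWithin ℝ g D2 p.2) D2 p.2 :=
    ((hgs.differentiableOn (by simp)) p.2 hp2).hasFDerivWithinAt
  have hDf : HasFDerivWithinAt (fderivWithin ℝ f D2)
      (fderivWithin ℝ (fderivWithin ℝ f D2) D2 p.2) D2 p.2 :=
    (((hfs.fderivWithin (m := 1) hD2u (WithTop.coe_le_coe.2 le_top)).differentiableOn (by simp)) p.2
      hp2).hasFDerivWithinAt
  have hDg : HasFDerivWithinAt (fderivWithin ℝ g D2)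
      (fderivWithin ℝ (fderivWithin ℝ g D2) D2 p.2) D2 p.2 :=
    (((hgs.fderivWithin (m := 1) hD2u (WithTop.coe_le_coe.2 le_top)).differentiableOn (by simp)) p.2
      hp2).hasFDerivWithinAt
  have hb3 : HasFDerivWithinAt (fun x => fderivWithin ℝ f D2 x u.2)
      ((ContinuousLinearMap.apply ℝ ℝ u.2).comp (fderivWithin ℝ (fderivWithin ℝ f D2) D2 p.2))
      D2 p.2 :=
    (ContinuousLinearMap.apply ℝ ℝ u.2).hasFDerivAt.comp_hasFDerivWithinAt p.2 hDf
  have hb4 : HasFDerivWithinAt (fun x => fderivWithin ℝ g D2 x u.2)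
      ((ContinuousLinearMap.apply ℝ ℝ u.2).comp (fderivWithin ℝ (fderivWithin ℝ g D2) D2 p.2))
      D2 p.2 :=
    (ContinuousLinearMap.apply ℝ ℝ u.2).hasFDerivAt.comp_hasFDerivWithinAt p.2 hDg
  have hbeta : HasFDerivWithinAt (fun x : ℂ => beta x u.2)
      ((u.2.im / (2*Real.pi)) • Complex.reCLM - (u.2.re / (2*Real.pi)) • Complex.imCLM) D2 p.2 := by
    apply HasFDerivWithinAt.congr
      (((u.2.im / (2*Real.pi)) • Complex.reCLM
          - (u.2.re / (2*Real.pi)) • Complex.imCLM).hasFDerivAt.hasFDerivWithinAt)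
    · intro y _
      simp [beta]
      ring
    · simp [beta]
      ring
  have hsnd : HasFDerivWithinAt (Prod.snd : ℝ × ℂ → ℂ) (ContinuousLinearMap.snd ℝ ℝ ℂ)
      ((Set.univ : Set ℝ) ×ˢ D2) p := hasFDerivAt_snd.hasFDerivWithinAt
  have hmaps : Set.MapsTo (Prod.snd : ℝ × ℂ → ℂ) ((Set.univ : Set ℝ) ×ˢ D2) D2 :=
    fun q hq => hq.2
  have lifted : ∀ (b : ℂ → ℝ) (B : ℂ →L[ℝ] ℝ), HasFDerivWithinAt b B D2 p.2 →
      HasFDerivWithinAt (fun q : ℝ × ℂ => b q.2)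
        (B.comp (ContinuousLinearMap.snd ℝ ℝ ℂ)) ((Set.univ : Set ℝ) ×ˢ D2) p :=
    fun b B hb => hb.comp p hsnd hmaps
  have liftt : ∀ (a : ℝ → ℝ) (a' : ℝ), HasDerivAt a a' p.1 →
      HasFDerivWithinAt (fun q : ℝ × ℂ => a q.1)
        ((ContinuousLinearMap.smulRight (1 : ℝ →L[ℝ] ℝ) a').comp (ContinuousLinearMap.fst ℝ ℝ ℂ))
        ((Set.univ : Set ℝ) ×ˢ D2) p :=
    fun a a' ha => ((ha.hasFDerivAt).comp p hasFDerivAt_fst).hasFDerivWithinAt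
  have hA1 := liftt _ _ ha1
  have hA2 := liftt _ _ ha2
  have hA3 := liftt _ _ ha3
  have hA4 := liftt _ _ ha4
  have hB1 := lifted _ _ hb1
  have hB2 := lifted _ _ hb2
  have hB3 := lifted _ _ hb3
  have hB4 := lifted _ _ hb4
  have hBeta := lifted _ _ hbeta
  have hmain := ((((((hA1.mul hB1).add (hA2.mul hB2)).mul_const u.1).add hBeta).add
    (hA3.mul hB3)).add (hA4.mul hB4))
  rw [(show HasFDerivWithinAt (fun q : ℝ × ℂ => ((1 - deriv η q.1) * f q.2 + deriv η q.1 * g q.2) * u.1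
      + beta q.2 u.2 + (q.1 - η q.1) * fderivWithin ℝ f D2 q.2 u.2
      + η q.1 * fderivWithin ℝ g D2 q.2 u.2) _ _ p from hmain).fderivWithin (hSu p hp)]
  simp [beta, ContinuousLinearMap.smulRight_apply]
  ring

/-- The 1-form `λ₀ = F dt + β_t` on `ℝ × D²`, where
`F(t,x) = (1−η'(t))f(x) + η'(t)f(φ(x))` and
`β_t = β + (t−η(t))df + η(t)d(f∘φ)`, satisfies `λ₀ ∧ dλ₀ = F dt∧ω` with `F > 0`
everywhere; in particular `λ₀` is a contact form on `ℝ × int(D²)`. -/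
theorem mapping_torus_contact_form (f : ℂ → ℝ)
    (hfs : ContDiffOn ℝ (⊤ : ℕ∞) f D2) (hfpos : ∀ x ∈ D2, 0 < f x)
    (φ : ℂ → ℂ) (hφs : ContDiffOn ℝ (⊤ : ℕ∞) φ D2) (hφm : Set.MapsTo φ D2 D2)
    (ε : ℝ) (hε0 : 0 < ε) (hε : ε < sInf (f '' D2) / sSup (f '' D2))
    (η : ℝ → ℝ) (hη : ContDiff ℝ (⊤ : ℕ∞) η)
    (hη' : ∀ t : ℝ, -ε < deriv η t ∧ deriv η t ≤ 1)
    (F : ℝ → ℂ → ℝ)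
    (hF : ∀ (t : ℝ) (x : ℂ), F t x = (1 - deriv η t) * f x + deriv η t * f (φ x))
    (lam0 : ℝ × ℂ → ℝ × ℂ → ℝ)
    (hlam : ∀ (p : ℝ × ℂ) (u : ℝ × ℂ),
      lam0 p u = F p.1 p.2 * u.1 + beta p.2 u.2
        + (p.1 - η p.1) * fderivWithin ℝ f D2 p.2 u.2
        + η p.1 * fderivWithin ℝ (fun z => f (φ z)) D2 p.2 u.2)
    (S : Set (ℝ × ℂ)) (hS : S = (Set.univ : Set ℝ) ×ˢ D2) :
    (∀ (t : ℝ), ∀ x ∈ D2, 0 < F t x) ∧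
    (∀ p ∈ S,
      lam0 p (1, 0) *
          (fderivWithin ℝ (fun q => lam0 q (0, Complex.I)) S p (0, 1)
            - fderivWithin ℝ (fun q => lam0 q (0, 1)) S p (0, Complex.I))
        - lam0 p (0, 1) *
          (fderivWithin ℝ (fun q => lam0 q (0, Complex.I)) S p (1, 0)
            - fderivWithin ℝ (fun q => lam0 q (1, 0)) S p (0, Complex.I))
        + lam0 p (0, Complex.I) *
          (fderivWithin ℝ (fun q => lam0 q (0, 1)) S p (1, 0)
            - fderivWithin ℝ (fun q => lam0 q (1, 0)) S p (0, 1))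
        = F p.1 p.2 / Real.pi) := by
  subst hS
  have hgs : ContDiffOn ℝ (⊤ : ℕ∞) (fun z => f (φ z)) D2 := hfs.comp hφs hφm
  -- positivity of F
  have hD2c : IsCompact D2 := isCompact_closedBall 0 1
  have hD2n : D2.Nonempty := ⟨0, by simp [D2]⟩
  have himg : IsCompact (f '' D2) := hD2c.image_of_continuousOn hfs.continuousOn
  have himg_ne : (f '' D2).Nonempty := hD2n.image f
  have hm_mem : sInf (f '' D2) ∈ f '' D2 := himg.sInf_mem himg_ne
  have hmpos : 0 < sInf (f '' D2) := by
    obtain ⟨a, ha, hfa⟩ := hm_mem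
    exact hfa ▸ hfpos a ha
  have hle : ∀ x ∈ D2, sInf (f '' D2) ≤ f x := fun x hx =>
    csInf_le himg.bddBelow ⟨x, hx, rfl⟩
  have hge : ∀ x ∈ D2, f x ≤ sSup (f '' D2) := fun x hx =>
    le_csSup himg.bddAbove ⟨x, hx, rfl⟩
  have hMpos : 0 < sSup (f '' D2) := by
    obtain ⟨a, ha, hfa⟩ := hm_mem
    exact lt_of_lt_of_le hmpos (le_trans (hle a ha) (hge a ha))
  have hεM : ε * sSup (f '' D2) < sInf (f '' D2) := (lt_div_iff₀ hMpos).1 hε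
  have hFpos : ∀ (t : ℝ), ∀ x ∈ D2, 0 < F t x := by
    intro t x hx
    rw [hF]
    have h1 := hle x hx
    have h2 := hle (φ x) (hφm hx)
    have h3 := hge (φ x) (hφm hx)
    have h4 := hge x hx
    obtain ⟨hc1, hc2⟩ := hη' t
    rcases le_or_gt 0 (deriv η t) with hc | hc
    · nlinarith
    · nlinarith
  refine ⟨hFpos, ?_⟩
  intro p hp
  have hp2 : p.2 ∈ D2 := hp.2
  -- rewrite the six derivatives
  have hfun : ∀ u : ℝ × ℂ, (fun q => lam0 q u) =
      (fun q : ℝ × ℂ => ((1 - deriv η q.1) * f q.2 + deriv η q.1 * (fun z => f (φ z)) q.2) * u.1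
        + beta q.2 u.2 + (q.1 - η q.1) * fderivWithin ℝ f D2 q.2 u.2
        + η q.1 * fderivWithin ℝ (fun z => f (φ z)) D2 q.2 u.2) := by
    intro u
    funext q
    rw [hlam, hF]
  have key : ∀ u w : ℝ × ℂ,
      fderivWithin ℝ (fun q => lam0 q u) ((Set.univ : Set ℝ) ×ˢ D2) p w
      = (-(deriv (deriv η) p.1) * w.1 * f p.2
            + (1 - deriv η p.1) * fderivWithin ℝ f D2 p.2 w.2
            + deriv (deriv η) p.1 * w.1 * (fun z => f (φ z)) p.2
            + deriv η p.1 * fderivWithin ℝ (fun z => f (φ z)) D2 p.2 w.2) * u.1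
          + beta w.2 u.2
          + ((1 - deriv η p.1) * w.1 * fderivWithin ℝ f D2 p.2 u.2
              + (p.1 - η p.1) * (fderivWithin ℝ (fderivWithin ℝ f D2) D2 p.2 w.2) u.2)
          + (deriv η p.1 * w.1 * fderivWithin ℝ (fun z => f (φ z)) D2 p.2 u.2
              + η p.1 *
                (fderivWithin ℝ (fderivWithin ℝ (fun z => f (φ z)) D2) D2 p.2 w.2) u.2) := by
    intro u w
    rw [hfun u]
    exact key_fderiv f (fun z => f (φ z)) hfs hgs η hη u w p hp
  have hsymf := D2_symm f hfs hp2
  have hsymg := D2_symm (fun z => f (φ z)) hgs hp2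
  rw [key, key, key, key, key, key, hlam, hlam, hlam]
  have hs1 := hsymf 1 Complex.I
  have hs2 := hsymg 1 Complex.I
  have hπ : Real.pi ≠ 0 := Real.pi_ne_zero
  simp only [beta]
  simp
  rw [hs1, hs2]
  field_simp
  ring
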